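/- arXiv:1001.4541 — 4 statements merged into one kernel-verified Lean document; each statement's English description precedes it below -/
import Mathlib

section
/- Let J : ℝ × ℝ × ℝ → M₂(ℝ) be the map J(θ₁, t, θ₂) = k_{θ₁} · a_t · k_{θ₂}. Then J is differentiable, and for every (θ₁, t, θ₂) and every tangent direction (ξ₁, η, ξ₂) ∈ ℝ³, the Fréchet derivative of J at (θ₁, t, θ₂) applied to (ξ₁, η, ξ₂) equals J(θ₁, t, θ₂) · ( k_{θ₂}⁻¹ · ( ξ₁·((cosh t)·Y − (sinh t)·V) + (η/2)·h ) · k_{θ₂} + ξ₂·Y ). -/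
attribute [local instance] Matrix.normedAddCommGroup Matrix.normedSpace

noncomputable def kmat (θ : ℝ) : Matrix (Fin 2) (Fin 2) ℝ :=
  !![Real.cos θ, Real.sin θ; -Real.sin θ, Real.cos θ]

noncomputable def amat (t : ℝ) : Matrix (Fin 2) (Fin 2) ℝ :=
  !![Real.exp (t/2), 0; 0, Real.exp (-t/2)]

def hmat : Matrix (Fin 2) (Fin 2) ℝ := !![1, 0; 0, -1]
def emat : Matrix (Fin 2) (Fin 2) ℝ := !![0, 1; 0, 0]
def fmat : Matrix (Fin 2) (Fin 2) ℝ := !![0, 0; 1, 0]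

def Vmat : Matrix (Fin 2) (Fin 2) ℝ := emat + fmat
def Ymat : Matrix (Fin 2) (Fin 2) ℝ := emat - fmat

/-- The Cartan decomposition map `J(θ₁, t, θ₂) = k_{θ₁} a_t k_{θ₂}`. -/
noncomputable def Jmap : ℝ × ℝ × ℝ → Matrix (Fin 2) (Fin 2) ℝ :=
  fun p => kmat p.1 * amat p.2.1 * kmat p.2.2

/-!
`k_θ = cos θ • 1 + sin θ • Y` and `a_t = cosh (t/2) • 1 + sinh (t/2) • h`, and `Y² = -1`, `h² = 1`,
so `k_θ' = k_θ Y` and `a_t' = a_t h / 2`. The product rule gives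
`dJ (ξ₁, η, ξ₂) = ξ₁ k_{θ₁} Y a_t k_{θ₂} + (η/2) k_{θ₁} a_t h k_{θ₂} + ξ₂ k_{θ₁} a_t k_{θ₂} Y`;
the identity `a_t (cosh t • Y - sinh t • V) = Y a_t` moves `Y` past `a_t`, and conjugating by
`k_{θ₂}` puts the first two terms into the claimed form.
-/

section MatrixCalculus

variable {𝕜 : Type*} [NontriviallyNormedField 𝕜] [CompleteSpace 𝕜]
  {l m n : Type*} [Fintype l] [Fintype m] [Fintype n]

noncomputable def matrixMulL : Matrix l m 𝕜 →L[𝕜] Matrix m n 𝕜 →L[𝕜] Matrix l n 𝕜 :=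
  LinearMap.toContinuousLinearMap
    (LinearMap.toContinuousLinearMap.toLinearMap ∘ₗ mulLinearMap 𝕜)

theorem HasFDerivAt.matrix_mul {E : Type*} [NormedAddCommGroup E] [NormedSpace 𝕜 E]
    {f : E → Matrix l m 𝕜} {g : E → Matrix m n 𝕜} {f' : E →L[𝕜] Matrix l m 𝕜}
    {g' : E →L[𝕜] Matrix m n 𝕜} {x : E} (hf : HasFDerivAt f f' x) (hg : HasFDerivAt g g' x) :
    HasFDerivAt (fun y => f y * g y)
      -- the summands come with different (defeq) topologies on matrices, product and normed;
      -- the ascription unifies them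
      (matrixMulL (f x) ∘L g' + (matrixMulL.flip (g x) ∘L f' : E →L[𝕜] Matrix l n 𝕜)) x :=
  matrixMulL.hasFDerivAt_of_bilinear hf hg

end MatrixCalculus

theorem Ymat_mul_Ymat : Ymat * Ymat = -1 := by
  ext i j; fin_cases i <;> fin_cases j <;> simp [Ymat, emat, fmat]

theorem hmat_mul_hmat : hmat * hmat = 1 := by
  ext i j; fin_cases i <;> fin_cases j <;> simp [hmat]

theorem kmat_eq_cos_smul_one_add_sin_smul_Ymat (θ : ℝ) :
    kmat θ = Real.cos θ • 1 + Real.sin θ • Ymat := by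
  ext i j; fin_cases i <;> fin_cases j <;> simp [kmat, Ymat, emat, fmat]

theorem amat_eq_cosh_smul_one_add_sinh_smul_hmat (t : ℝ) :
    amat t = Real.cosh (t / 2) • 1 + Real.sinh (t / 2) • hmat := by
  ext i j; fin_cases i <;> fin_cases j <;>
    simp [amat, hmat, neg_div, ← Real.cosh_sub_sinh, sub_eq_add_neg]

theorem hasDerivAt_kmat (θ : ℝ) : HasDerivAt kmat (kmat θ * Ymat) θ := by
  have h := ((Real.hasDerivAt_cos θ).smul_const (1 : Matrix (Fin 2) (Fin 2) ℝ)).add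
    ((Real.hasDerivAt_sin θ).smul_const Ymat)
  rw [funext kmat_eq_cos_smul_one_add_sin_smul_Ymat]
  refine h.congr_deriv ?_
  rw [add_mul, smul_mul_assoc, smul_mul_assoc, Ymat_mul_Ymat, one_mul]
  module

theorem hasDerivAt_amat (t : ℝ) : HasDerivAt amat ((1 / 2 : ℝ) • (amat t * hmat)) t := by
  have h := (((Real.hasDerivAt_cosh _).comp t ((hasDerivAt_id' t).div_const 2)).smul_const
    (1 : Matrix (Fin 2) (Fin 2) ℝ)).add
    (((Real.hasDerivAt_sinh _).comp t ((hasDerivAt_id' t).div_const 2)).smul_const hmat)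
  rw [funext amat_eq_cosh_smul_one_add_sinh_smul_hmat]
  refine h.congr_deriv ?_
  rw [add_mul, smul_mul_assoc, smul_mul_assoc, hmat_mul_hmat, one_mul]
  module

theorem det_kmat (θ : ℝ) : (kmat θ).det = 1 := by
  simp [kmat, Matrix.det_fin_two_of, ← sq, Real.cos_sq_add_sin_sq]

theorem amat_mul_cosh_smul_Ymat_sub_sinh_smul_Vmat (t : ℝ) :
    amat t * (Real.cosh t • Ymat - Real.sinh t • Vmat) = Ymat * amat t := by
  ext i j; fin_cases i <;> fin_cases j <;>
    simp [amat, Ymat, Vmat, emat, fmat, ← neg_add', Real.cosh_add_sinh, ← Real.exp_add] <;>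
    ring_nf

theorem exists_hasFDerivAt_Jmap (θ₁ t θ₂ : ℝ) :
    ∃ L : (ℝ × ℝ × ℝ) →L[ℝ] Matrix (Fin 2) (Fin 2) ℝ, HasFDerivAt Jmap L (θ₁, t, θ₂) ∧
      ∀ ξ₁ η ξ₂ : ℝ, L (ξ₁, η, ξ₂) =
        ξ₁ • (kmat θ₁ * Ymat * amat t * kmat θ₂) + (η / 2) • (kmat θ₁ * amat t * hmat * kmat θ₂) +
          ξ₂ • (kmat θ₁ * amat t * kmat θ₂ * Ymat) := by
  have hk₁ := (hasDerivAt_kmat θ₁).hasFDerivAt.comp (θ₁, t, θ₂) (hasFDerivAt_fst (𝕜 := ℝ))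
  have ha := (hasDerivAt_amat t).hasFDerivAt.comp (θ₁, t, θ₂) (hasFDerivAt_snd (𝕜 := ℝ)).fst
  have hk₂ := (hasDerivAt_kmat θ₂).hasFDerivAt.comp (θ₁, t, θ₂) (hasFDerivAt_snd (𝕜 := ℝ)).snd
  refine ⟨_, (hk₁.matrix_mul ha).matrix_mul hk₂, fun ξ₁ η ξ₂ => ?_⟩
  change kmat θ₁ * amat t * (ξ₂ • (kmat θ₂ * Ymat)) +
    (kmat θ₁ * (η • (1 / 2 : ℝ) • (amat t * hmat)) + ξ₁ • (kmat θ₁ * Ymat) * amat t) * kmat θ₂ = _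
  simp only [add_mul, smul_mul_assoc, mul_smul_comm, mul_assoc]
  module

theorem cartan_derivative :
    Differentiable ℝ Jmap ∧
    ∀ θ₁ t θ₂ ξ₁ η ξ₂ : ℝ,
      fderiv ℝ Jmap (θ₁, t, θ₂) (ξ₁, η, ξ₂) =
        Jmap (θ₁, t, θ₂) *
          ((kmat θ₂)⁻¹ *
              (ξ₁ • (Real.cosh t • Ymat - Real.sinh t • Vmat) + (η/2) • hmat) * kmat θ₂ +
            ξ₂ • Ymat) := by
  refine ⟨fun p => ?_, fun θ₁ t θ₂ ξ₁ η ξ₂ => ?_⟩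
  · obtain ⟨L, hL, -⟩ := exists_hasFDerivAt_Jmap p.1 p.2.1 p.2.2
    exact hL.differentiableAt
  obtain ⟨L, hL, hL_apply⟩ := exists_hasFDerivAt_Jmap θ₁ t θ₂
  set X := ξ₁ • (Real.cosh t • Ymat - Real.sinh t • Vmat) + (η/2) • hmat
  have hX : amat t * X = ξ₁ • (Ymat * amat t) + (η/2) • (amat t * hmat) := by
    rw [mul_add, mul_smul_comm, mul_smul_comm, amat_mul_cosh_smul_Ymat_sub_sinh_smul_Vmat]
  have hk : IsUnit (kmat θ₂).det := by rw [det_kmat]; exact isUnit_one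
  calc fderiv ℝ Jmap (θ₁, t, θ₂) (ξ₁, η, ξ₂)
      = ξ₁ • (kmat θ₁ * Ymat * amat t * kmat θ₂) + (η / 2) • (kmat θ₁ * amat t * hmat * kmat θ₂) +
          ξ₂ • (kmat θ₁ * amat t * kmat θ₂ * Ymat) := by rw [hL.fderiv, hL_apply]
    _ = kmat θ₁ * (amat t * X) * kmat θ₂ + ξ₂ • (kmat θ₁ * amat t * kmat θ₂ * Ymat) := by
      simp only [hX, mul_add, add_mul, mul_smul_comm, smul_mul_assoc, mul_assoc]
    _ = Jmap (θ₁, t, θ₂) * ((kmat θ₂)⁻¹ * X * kmat θ₂ + ξ₂ • Ymat) := by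
      simp only [Jmap, mul_add, mul_smul_comm, mul_assoc,
        Matrix.mul_nonsing_inv_cancel_left _ _ hk]
end

section
/- Let s ∈ ℝ and k ∈ ℤ, and let f : ℝ → ℂ be a differentiable function satisfying the differential equation 2·s·x·f(x) + (1 + x²)·f'(x) = 2·i·k·f(x) for all x ∈ ℝ. Then there exists a constant c ∈ ℂ such that f(x) = c·(x − i)^{k − s}·(x + i)^{−k − s} for all x ∈ ℝ, where z^w denotes the principal-branch complex power. -/
/-!
The factor `μ(x) = (x - i)^(s - k) (x + i)^(s + k)` has logarithmic derivative
`(s - k)/(x - i) + (s + k)/(x + i) = (2 s x - 2 i k)/(1 + x²)`, so the equation says exactly that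
`(f μ)' = 0`. Hence `f μ` is a constant `c`, and `f = c μ⁻¹`, where `μ⁻¹` is the stated product
because `z ^ (-w) = (z ^ w)⁻¹` holds for the principal branch. The bases `x ± i` stay off the
branch cut, which is what makes the powers differentiable along the real line.
-/

open Complex

namespace Complex

lemma ofReal_add_ne_zero_of_im_ne_zero {a : ℂ} (ha : a.im ≠ 0) (x : ℝ) : (x : ℂ) + a ≠ 0 :=
  fun h => ha (by simpa using congrArg im h)

lemma ofReal_add_I_ne_zero (x : ℝ) : (x : ℂ) + I ≠ 0 :=
  ofReal_add_ne_zero_of_im_ne_zero (by simp) x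

lemma ofReal_sub_I_ne_zero (x : ℝ) : (x : ℂ) - I ≠ 0 := by
  simpa [sub_eq_add_neg] using ofReal_add_ne_zero_of_im_ne_zero (a := -I) (by simp) x

lemma hasDerivAt_ofReal_add_cpow {a : ℂ} (ha : a.im ≠ 0) (w : ℂ) (x : ℝ) :
    HasDerivAt (fun t : ℝ => ((t : ℂ) + a) ^ w) (w / ((x : ℂ) + a) * ((x : ℂ) + a) ^ w) x := by
  have hslit : (x : ℂ) + a ∈ slitPlane := by simp [mem_slitPlane_iff, ha]
  refine (((hasDerivAt_id' (x : ℂ)).add_const a).cpow_const hslit).comp_ofReal.congr_deriv ?_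
  rw [cpow_sub _ _ (ofReal_add_ne_zero_of_im_ne_zero ha x), cpow_one]
  field_simp

end Complex

noncomputable def integratingFactor (s k : ℂ) (x : ℝ) : ℂ :=
  ((x : ℂ) - I) ^ (s - k) * ((x : ℂ) + I) ^ (s + k)

lemma integratingFactor_ne_zero (s k : ℂ) (x : ℝ) : integratingFactor s k x ≠ 0 :=
  mul_ne_zero (cpow_ne_zero_iff.2 (.inl (ofReal_sub_I_ne_zero x)))
    (cpow_ne_zero_iff.2 (.inl (ofReal_add_I_ne_zero x)))

lemma inv_integratingFactor (s k : ℂ) (x : ℝ) :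
    (integratingFactor s k x)⁻¹ = ((x : ℂ) - I) ^ (k - s) * ((x : ℂ) + I) ^ (-k - s) := by
  rw [integratingFactor, mul_inv, ← cpow_neg, ← cpow_neg]
  congr 2 <;> ring

lemma hasDerivAt_integratingFactor (s k : ℂ) (x : ℝ) :
    HasDerivAt (integratingFactor s k)
      ((2 * s * x - 2 * I * k) / (1 + (x : ℂ) ^ 2) * integratingFactor s k x) x := by
  have hm := hasDerivAt_ofReal_add_cpow (a := -I) (by simp) (s - k) x
  have hp := hasDerivAt_ofReal_add_cpow (a := I) (by simp) (s + k) x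
  simp only [← sub_eq_add_neg] at hm
  refine (hm.mul hp).congr_deriv ?_
  have hxm := ofReal_sub_I_ne_zero x
  have hxp := ofReal_add_I_ne_zero x
  have h1x2 : 1 + (x : ℂ) ^ 2 = ((x : ℂ) - I) * ((x : ℂ) + I) := by linear_combination I_sq
  rw [integratingFactor, h1x2]
  field_simp
  ring

lemma mul_integratingFactor_eq_const {s k : ℂ} {f : ℝ → ℂ} (hf : Differentiable ℝ f)
    (hode : ∀ x : ℝ, 2 * s * x * f x + (1 + (x : ℂ) ^ 2) * deriv f x = 2 * I * k * f x)
    (x : ℝ) : f x * integratingFactor s k x = f 0 * integratingFactor s k 0 := by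
  have hderiv (t : ℝ) : HasDerivAt (fun t => f t * integratingFactor s k t) 0 t := by
    refine ((hf t).hasDerivAt.mul (hasDerivAt_integratingFactor s k t)).congr_deriv ?_
    have h1x2 : 1 + (t : ℂ) ^ 2 ≠ 0 := by exact_mod_cast (by positivity : (1 + t ^ 2 : ℝ) ≠ 0)
    field_simp
    linear_combination integratingFactor s k t * hode t
  exact is_const_of_deriv_eq_zero (fun t => (hderiv t).differentiableAt)
    (fun t => (hderiv t).deriv) x 0

theorem weight_vector_ode_solution (s : ℝ) (k : ℤ) (f : ℝ → ℂ)
    (hf : Differentiable ℝ f)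
    (hode : ∀ x : ℝ, 2 * (s : ℂ) * (x : ℂ) * f x + (1 + (x : ℂ)^2) * deriv f x
      = 2 * Complex.I * (k : ℂ) * f x) :
    ∃ c : ℂ, ∀ x : ℝ,
      f x = c * ((x : ℂ) - Complex.I) ^ ((k : ℂ) - (s : ℂ)) *
        ((x : ℂ) + Complex.I) ^ (-(k : ℂ) - (s : ℂ)) := by
  refine ⟨f 0 * integratingFactor s k 0, fun x => ?_⟩
  rw [mul_assoc, ← inv_integratingFactor, eq_mul_inv_iff_mul_eq₀ (integratingFactor_ne_zero _ _ x)]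
  exact mul_integratingFactor_eq_const hf hode x
end

section
/- Let s ∈ ℝ with 1/2 < s < 1 and let n, k ∈ ℤ. Then for every r with 0 < r < 1, the function Φ_{2n,2k} is twice differentiable at r and satisfies ((1 − r²)²/4)·Φ_{2n,2k}''(r) + ((1 − r²)²/(4r))·Φ_{2n,2k}'(r) + ( −((1 − r²)²/(4r²))·(n² + k²) + ((1 − r⁴)/(2r²))·n·k + s·(1 − s) )·Φ_{2n,2k}(r) = 0. -/
/-!
Write `Φ = u · w` with the gauge factor `u(r) = (1 - r²)^s r^N`, `N = |n - k|`, and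
`w(r) = F(a, b; 1 + N; r²)`, `a = s - εk`, `b = s + εn`. Since `u'/u = N/r - 2sr/(1 - r²)` and
`a + b = 2s + N`, the radial operator applied to `u w` is `u (1 - r²)` times the hypergeometric
operator `x(1 - x)F'' + (c - (a + b + 1)x)F' - abF` at `x = r²`; the potentials agree because
`(s - a)(s - b) = -nk`. The hypergeometric equation holds coefficientwise by the recursion
`(m + 1)(c + m) C_{m+1} = (a + m)(b + m) C_m`, once the series, whose radius of convergence is at
least `1`, is differentiated termwise.
-/

/-- The Gauss hypergeometric series `F(a, b; c; x) = Σ (a)_m (b)_m / ((c)_m m!) x^m`. -/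
noncomputable def hyperF (a b c x : ℝ) : ℝ :=
  ∑' m : ℕ, ((ascPochhammer ℝ m).eval a * (ascPochhammer ℝ m).eval b /
    ((ascPochhammer ℝ m).eval c * (Nat.factorial m))) * x ^ m

/-- The sign `ε = 1` if `n ≥ k`, `ε = −1` otherwise. -/
noncomputable def eps (n k : ℤ) : ℝ := if k ≤ n then 1 else -1

/-- `Φ_{2n,2k}(r) = (1 − r²)^s r^{|n−k|} F(s − εk, s + εn; 1 + |n−k|; r²)`. -/
noncomputable def Phi (s : ℝ) (n k : ℤ) (r : ℝ) : ℝ :=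
  (1 - r ^ 2) ^ s * r ^ (n - k).natAbs *
    hyperF (s - eps n k * k) (s + eps n k * n) (1 + (n - k).natAbs) (r ^ 2)

open Filter Topology

namespace FormalMultilinearSeries

variable {𝕜 : Type*} [RCLike 𝕜]

def derivCoeff (c : ℕ → 𝕜) (n : ℕ) : 𝕜 := (n + 1) * c (n + 1)

theorem radius_ofScalars_le_radius_derivCoeff (c : ℕ → 𝕜) :
    (ofScalars 𝕜 c).radius ≤ (ofScalars 𝕜 (derivCoeff c)).radius := by
  refine ENNReal.le_of_forall_nnreal_lt fun r hr => ?_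
  obtain ⟨r', hrr', hr'⟩ := ENNReal.lt_iff_exists_nnreal_btwn.1 hr
  rw [ENNReal.coe_lt_coe] at hrr'
  have hr'0 : (0 : ℝ) < r' := r.2.trans_lt hrr'
  have hq : ‖(r / r' : ℝ)‖ < 1 := by
    rw [Real.norm_of_nonneg (by positivity), div_lt_one hr'0]
    exact hrr'
  obtain ⟨C, -, hC⟩ := (ofScalars 𝕜 c).norm_mul_pow_le_of_lt_radius hr'
  refine le_radius_of_summable _ (Summable.of_nonneg_of_le (fun n => by positivity) (fun n => ?_)
    (((summable_pow_mul_geometric_of_norm_lt_one 1 hq).add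
      (summable_geometric_of_norm_lt_one hq)).mul_left (C / r')))
  simp only [ofScalars_norm] at hC ⊢
  have hn : ‖(n : 𝕜) + 1‖ = n + 1 := mod_cast RCLike.norm_natCast (K := 𝕜) (n + 1)
  rw [derivCoeff, norm_mul, hn]
  calc ((n : ℝ) + 1) * ‖c (n + 1)‖ * r ^ n
      = ((n : ℝ) + 1) * (r / r') ^ n / r' * (‖c (n + 1)‖ * r' ^ (n + 1)) := by
        rw [div_pow]; field_simp; ring
    _ ≤ ((n : ℝ) + 1) * (r / r') ^ n / r' * C := by gcongr; exact hC (n + 1)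
    _ = C / r' * ((n : ℝ) ^ 1 * (r / r') ^ n + (r / r') ^ n) := by ring

theorem hasDerivAt_ofScalarsSum {c : ℕ → 𝕜} {x : 𝕜} (hx : ‖x‖ₑ < (ofScalars 𝕜 c).radius) :
    HasDerivAt (ofScalarsSum c) (ofScalarsSum (derivCoeff c) x) x := by
  obtain ⟨ρ, hxρ, hρ⟩ := ENNReal.lt_iff_exists_nnreal_btwn.1 hx
  rw [enorm_lt_coe] at hxρ
  have hsum : Summable fun n : ℕ => (n : ℝ) * ‖c n‖ * (ρ : ℝ) ^ (n - 1) := by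
    refine (summable_nat_add_iff 1).1 ((summable_norm_mul_pow _
      (hρ.trans_le (radius_ofScalars_le_radius_derivCoeff c))).congr fun n => ?_)
    have hn : ‖(n : 𝕜) + 1‖ = n + 1 := mod_cast RCLike.norm_natCast (K := 𝕜) (n + 1)
    simp only [ofScalars_norm, derivCoeff, norm_mul, hn, Nat.cast_add_one, add_tsub_cancel_right]
  have hbound : ∀ (n : ℕ) (y : 𝕜), y ∈ Metric.ball 0 ρ →
      ‖c n * (n * y ^ (n - 1))‖ ≤ n * ‖c n‖ * (ρ : ℝ) ^ (n - 1) := by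
    intro n y hy
    rw [mem_ball_zero_iff] at hy
    rw [norm_mul, norm_mul, norm_pow, RCLike.norm_natCast]
    calc ‖c n‖ * (n * ‖y‖ ^ (n - 1)) ≤ ‖c n‖ * (n * (ρ : ℝ) ^ (n - 1)) := by gcongr
      _ = _ := by ring
  have hx' : x ∈ Metric.ball (0 : 𝕜) ρ := mem_ball_zero_iff.2 hxρ
  have key := hasDerivAt_tsum_of_isPreconnected hsum Metric.isOpen_ball
    (convex_ball 0 (ρ : ℝ)).isPreconnected (g := fun n y => c n * y ^ n)
    (fun n y _ => (hasDerivAt_pow n y).const_mul (c n)) hbound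
    (Metric.mem_ball_self ((norm_nonneg x).trans_lt hxρ))
    (summable_of_ne_finset_zero (s := {0}) fun n hn => by simp [Finset.mem_singleton.not.1 hn])
    hx'
  rw [ofScalarsSum_eq_tsum]
  simp only [smul_eq_mul]
  refine key.congr_deriv ?_
  rw [(Summable.of_norm_bounded hsum fun n => hbound n x hx').tsum_eq_zero_add]
  simp only [ofScalarsSum_eq_tsum, derivCoeff, smul_eq_mul, CharP.cast_eq_zero, zero_mul,
    mul_zero, zero_add, Nat.cast_add_one, add_tsub_cancel_right]
  exact tsum_congr fun n => by ring

theorem hasSum_ofScalarsSum {c : ℕ → 𝕜} {x : 𝕜} (hx : ‖x‖ₑ < (ofScalars 𝕜 c).radius) :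
    HasSum (fun n => c n * x ^ n) (ofScalarsSum c x) := by
  have h := (ofScalars 𝕜 c).hasSum (mem_eball_zero_iff.2 hx)
  simp only [ofScalars_apply_eq, smul_eq_mul] at h
  exact h

theorem hasSum_natCast_mul_of_hasSum_derivCoeff {c : ℕ → 𝕜} {x S : 𝕜}
    (h : HasSum (fun n => derivCoeff c n * x ^ n) S) :
    HasSum (fun n => n * c n * x ^ n) (x * S) := by
  have e (n : ℕ) : x * (derivCoeff c n * x ^ n) = ((n + 1 : ℕ) : 𝕜) * c (n + 1) * x ^ (n + 1) := by
    rw [derivCoeff]; push_cast; ring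
  have h' := h.mul_left x
  simp only [e] at h'
  exact (hasSum_nat_add_iff' 1).1 (by simpa using h')

end FormalMultilinearSeries

section Hypergeometric

open FormalMultilinearSeries

variable {𝕜 : Type*} [RCLike 𝕜]

theorem one_le_radius_ordinaryHypergeometricSeries (𝔸 : Type*) [NormedDivisionRing 𝔸]
    [NormedAlgebra 𝕜 𝔸] (a b c : 𝕜) : 1 ≤ (ordinaryHypergeometricSeries 𝔸 a b c).radius := by
  by_cases h : ∀ k : ℕ, (k : 𝕜) ≠ -a ∧ (k : 𝕜) ≠ -b ∧ (k : 𝕜) ≠ -c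
  · exact (ordinaryHypergeometricSeries_radius_eq_one 𝔸 a b c h).ge
  simp only [not_forall, not_and_or, not_not] at h
  obtain ⟨k, hk | hk | hk⟩ := h
  · rw [neg_eq_iff_eq_neg.1 hk.symm, ordinaryHypergeometric_radius_top_of_neg_nat₁]; exact le_top
  · rw [neg_eq_iff_eq_neg.1 hk.symm, ordinaryHypergeometric_radius_top_of_neg_nat₂]; exact le_top
  · rw [neg_eq_iff_eq_neg.1 hk.symm, ordinaryHypergeometric_radius_top_of_neg_nat₃]; exact le_top

theorem ordinaryHypergeometricCoefficient_succ_mul (a b : 𝕜) {c : 𝕜} {n : ℕ} (hc : c + n ≠ 0) :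
    ordinaryHypergeometricCoefficient a b c (n + 1) * ((n + 1) * (c + n)) =
      ordinaryHypergeometricCoefficient a b c n * ((a + n) * (b + n)) := by
  simp only [ordinaryHypergeometricCoefficient, ascPochhammer_succ_eval, Nat.factorial_succ,
    Nat.cast_mul, Nat.cast_add_one]
  by_cases hP : (ascPochhammer 𝕜 n).eval c = 0
  · simp [hP]
  have hn : (n : 𝕜) + 1 ≠ 0 := Nat.cast_add_one_ne_zero n
  have hf : (n.factorial : 𝕜) ≠ 0 := Nat.cast_ne_zero.2 n.factorial_ne_zero
  field_simp

theorem ordinaryHypergeometric_ode {a b c x : 𝕜} (hc : ∀ n : ℕ, c + n ≠ 0) (hx : ‖x‖ₑ < 1) :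
    x * (1 - x) * ofScalarsSum (derivCoeff (derivCoeff (ordinaryHypergeometricCoefficient a b c))) x
      + (c - (a + b + 1) * x) * ofScalarsSum (derivCoeff (ordinaryHypergeometricCoefficient a b c)) x
      - a * b * ₂F₁ a b c x = 0 := by
  set C := ordinaryHypergeometricCoefficient a b c
  have hR : ‖x‖ₑ < (ofScalars 𝕜 C).radius :=
    hx.trans_le (one_le_radius_ordinaryHypergeometricSeries 𝕜 a b c)
  have hR' := hR.trans_le (radius_ofScalars_le_radius_derivCoeff C)
  have hR'' := hR'.trans_le (radius_ofScalars_le_radius_derivCoeff _)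
  have h0 := hasSum_ofScalarsSum hR
  have h1 := hasSum_ofScalarsSum hR'
  have h2 := hasSum_ofScalarsSum hR''
  have hxF1 := hasSum_natCast_mul_of_hasSum_derivCoeff h1
  have hxF2 := hasSum_natCast_mul_of_hasSum_derivCoeff h2
  -- `x ^ 2 F'' = x (x F'')`, and `x F''` is the termwise derivative of `Σ (n - 1) C n xⁿ`
  have hx2F2 : HasSum (fun n => n * ((n - 1) * C n) * x ^ n)
      (x * (x * ofScalarsSum (derivCoeff (derivCoeff C)) x)) := by
    refine hasSum_natCast_mul_of_hasSum_derivCoeff (hxF2.congr_fun fun n => ?_)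
    simp only [derivCoeff]; push_cast; ring
  have hsum := ((hxF2.sub hx2F2).add ((h1.mul_left c).sub (hxF1.mul_left (a + b + 1)))).sub
    (h0.mul_left (a * b))
  have hzero : (fun n : ℕ => n * derivCoeff C n * x ^ n - n * ((n - 1) * C n) * x ^ n +
      (c * (derivCoeff C n * x ^ n) - (a + b + 1) * (n * C n * x ^ n)) - a * b * (C n * x ^ n))
      = fun _ => 0 := by
    funext n
    have := ordinaryHypergeometricCoefficient_succ_mul a b (hc n)
    simp only [derivCoeff]
    linear_combination x ^ n * this
  rw [hzero] at hsum
  change _ - a * b * ofScalarsSum C x = 0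
  linear_combination hsum.unique hasSum_zero

end Hypergeometric

section Radial

open FormalMultilinearSeries

theorem hasDerivAt_deriv_mul_of_hasDerivAt_eq_mul {𝕜 : Type*} [NontriviallyNormedField 𝕜]
    {u w p w' : 𝕜 → 𝕜} {r p' w'' : 𝕜} (hu : ∀ᶠ t in 𝓝 r, HasDerivAt u (p t * u t) t)
    (hw : ∀ᶠ t in 𝓝 r, HasDerivAt w (w' t) t) (hp : HasDerivAt p p' r)
    (hw' : HasDerivAt w' w'' r) :
    HasDerivAt (deriv fun t => u t * w t)
      (u r * (w'' + 2 * p r * w' r + (p' + p r ^ 2) * w r)) r := by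
  have hderiv : (deriv fun t => u t * w t) =ᶠ[𝓝 r] fun t => u t * (w' t + p t * w t) :=
    (hu.and hw).mono fun t ⟨hut, hwt⟩ => (hut.mul hwt).deriv.trans (by ring)
  refine ((hu.self_of_nhds.mul (hw'.add (hp.mul hw.self_of_nhds))).congr_of_eventuallyEq
    hderiv).congr_deriv ?_
  simp only [Pi.add_apply, Pi.mul_apply]
  ring

theorem hasDerivAt_one_sub_sq_rpow_mul_pow (s : ℝ) (N : ℕ) {t : ℝ} (ht : t ≠ 0)
    (ht1 : 0 < 1 - t ^ 2) :
    HasDerivAt (fun t => (1 - t ^ 2) ^ s * t ^ N)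
      ((N / t - 2 * s * t / (1 - t ^ 2)) * ((1 - t ^ 2) ^ s * t ^ N)) t := by
  have hsq : HasDerivAt (fun t : ℝ => 1 - t ^ 2) (-(2 * t)) t := by
    simpa using (hasDerivAt_pow 2 t).const_sub 1
  refine ((hsq.rpow_const (p := s) (Or.inl ht1.ne')).mul (hasDerivAt_pow N t)).congr_deriv ?_
  rw [Real.rpow_sub_one ht1.ne']
  rcases N with _ | N
  · simp only [pow_zero, mul_one, CharP.cast_eq_zero, zero_mul, mul_zero, add_zero, zero_div,
      zero_sub]
    field_simp
  · simp only [Nat.add_sub_cancel, pow_succ]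
    push_cast
    field_simp
    ring

theorem hasDerivAt_div_sub_div_one_sub_sq (s : ℝ) (N : ℕ) {t : ℝ} (ht : t ≠ 0)
    (ht1 : 1 - t ^ 2 ≠ 0) :
    HasDerivAt (fun t => N / t - 2 * s * t / (1 - t ^ 2))
      (-N / t ^ 2 - 2 * s * (1 + t ^ 2) / (1 - t ^ 2) ^ 2) t := by
  have hsq : HasDerivAt (fun t : ℝ => 1 - t ^ 2) (-(2 * t)) t := by
    simpa using (hasDerivAt_pow 2 t).const_sub 1
  refine (((hasDerivAt_id t).inv ht).const_mul (N : ℝ) |>.sub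
    (((hasDerivAt_id t).const_mul (2 * s)).div hsq ht1)).congr_deriv ?_
  simp only [id_eq]
  field_simp
  ring

theorem hasDerivAt_ofScalarsSum_sq {c : ℕ → ℝ} {t : ℝ} (ht : ‖t ^ 2‖ₑ < (ofScalars ℝ c).radius) :
    HasDerivAt (fun t => ofScalarsSum c (t ^ 2)) (2 * t * ofScalarsSum (derivCoeff c) (t ^ 2)) t := by
  refine (HasDerivAt.comp (h := fun t : ℝ => t ^ 2) t (hasDerivAt_ofScalarsSum ht)
    (hasDerivAt_pow 2 t)).congr_deriv ?_
  push_cast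
  ring

theorem hasDerivAt_two_mul_mul_ofScalarsSum_sq {c : ℕ → ℝ} {t : ℝ}
    (ht : ‖t ^ 2‖ₑ < (ofScalars ℝ c).radius) :
    HasDerivAt (fun t => 2 * t * ofScalarsSum c (t ^ 2))
      (2 * ofScalarsSum c (t ^ 2) + 2 * t * (2 * t * ofScalarsSum (derivCoeff c) (t ^ 2))) t := by
  have h := ((hasDerivAt_id t).const_mul (2 : ℝ)).mul (hasDerivAt_ofScalarsSum_sq ht)
  simp only [id_eq, mul_one] at h
  exact h

theorem enorm_sq_lt_one {t : ℝ} (ht : |t| < 1) : ‖t ^ 2‖ₑ < 1 := by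
  rw [← ofReal_norm, ENNReal.ofReal_lt_one, norm_pow, Real.norm_eq_abs]
  exact pow_lt_one₀ (abs_nonneg t) ht two_ne_zero

noncomputable def radialHypergeometric (a b s : ℝ) (N : ℕ) (t : ℝ) : ℝ :=
  (1 - t ^ 2) ^ s * t ^ N * ₂F₁ a b (1 + N) (t ^ 2)

theorem radialHypergeometric_ode {a b s : ℝ} {N : ℕ} (hab : a + b = 2 * s + N) {r : ℝ}
    (hr : 0 < r) (hr1 : r < 1) :
    DifferentiableAt ℝ (radialHypergeometric a b s N) r ∧
    DifferentiableAt ℝ (deriv (radialHypergeometric a b s N)) r ∧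
    (1 - r ^ 2) ^ 2 / 4 * deriv (deriv (radialHypergeometric a b s N)) r +
      (1 - r ^ 2) ^ 2 / (4 * r) * deriv (radialHypergeometric a b s N) r +
      (s * (1 - s) - (s - a) * (s - b) * (1 - r ^ 2) - (1 - r ^ 2) ^ 2 / (4 * r ^ 2) * N ^ 2) *
        radialHypergeometric a b s N r = 0 := by
  set C := ordinaryHypergeometricCoefficient a b (1 + N : ℝ)
  set F1 : ℝ → ℝ := ofScalarsSum (derivCoeff C)
  set F2 : ℝ → ℝ := ofScalarsSum (derivCoeff (derivCoeff C))
  set u := fun t : ℝ => (1 - t ^ 2) ^ s * t ^ N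
  set p := fun t : ℝ => N / t - 2 * s * t / (1 - t ^ 2)
  set w := fun t : ℝ => ₂F₁ a b (1 + N : ℝ) (t ^ 2)
  set w' := fun t : ℝ => 2 * t * F1 (t ^ 2)
  have hR : ∀ t : ℝ, |t| < 1 → ‖t ^ 2‖ₑ < (ofScalars ℝ C).radius := fun t ht =>
    (enorm_sq_lt_one ht).trans_le (one_le_radius_ordinaryHypergeometricSeries ℝ a b _)
  have hr_abs : |r| < 1 := by rwa [abs_of_pos hr]
  have h1r : 0 < 1 - r ^ 2 := by nlinarith
  have hu : ∀ᶠ t in 𝓝 r, HasDerivAt u (p t * u t) t :=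
    eventually_of_mem (Ioo_mem_nhds hr hr1) fun t ht =>
      hasDerivAt_one_sub_sq_rpow_mul_pow s N ht.1.ne' (by nlinarith [ht.1, ht.2])
  have hw : ∀ᶠ t in 𝓝 r, HasDerivAt w (w' t) t :=
    eventually_of_mem (Ioo_mem_nhds (by linarith) hr1) fun t ht =>
      hasDerivAt_ofScalarsSum_sq (hR t (abs_lt.2 ht))
  have hp := hasDerivAt_div_sub_div_one_sub_sq s N hr.ne' h1r.ne'
  have hw' : HasDerivAt w' (2 * F1 (r ^ 2) + 2 * r * (2 * r * F2 (r ^ 2))) r :=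
    hasDerivAt_two_mul_mul_ofScalarsSum_sq
      ((hR r hr_abs).trans_le (radius_ofScalars_le_radius_derivCoeff C))
  have hΦ' : HasDerivAt (radialHypergeometric a b s N) (u r * (w' r + p r * w r)) r :=
    (hu.self_of_nhds.mul hw.self_of_nhds).congr_deriv (by ring)
  have hΦ'' : HasDerivAt (deriv (radialHypergeometric a b s N)) _ r :=
    hasDerivAt_deriv_mul_of_hasDerivAt_eq_mul hu hw hp hw'
  have hode : r ^ 2 * (1 - r ^ 2) * F2 (r ^ 2) + (1 + N - (a + b + 1) * r ^ 2) * F1 (r ^ 2)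
      - a * b * w r = 0 :=
    ordinaryHypergeometric_ode (fun n => by positivity) (enorm_sq_lt_one hr_abs)
  refine ⟨hΦ'.differentiableAt, hΦ''.differentiableAt, ?_⟩
  rw [hΦ''.deriv, hΦ'.deriv]
  obtain rfl : b = 2 * s + N - a := by linarith
  linear_combination (norm := skip) (u r * (1 - r ^ 2)) * hode
  simp only [radialHypergeometric, u, p, w, w']
  field_simp
  ring

end Radial

theorem hyperF_eq_ordinaryHypergeometric (a b c : ℝ) : hyperF a b c = ₂F₁ a b c := by
  funext x
  rw [hyperF, ordinaryHypergeometric_eq_tsum]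
  exact tsum_congr fun m => by rw [smul_eq_mul]; ring

theorem eps_mul_self (n k : ℤ) : eps n k * eps n k = 1 := by
  unfold eps
  split_ifs <;> norm_num

theorem eps_mul_sub (n k : ℤ) : eps n k * ((n : ℝ) - k) = (n - k).natAbs := by
  rw [Nat.cast_natAbs, Int.cast_abs, Int.cast_sub]
  unfold eps
  split_ifs with h
  · rw [one_mul, abs_of_nonneg (by simpa using h)]
  · rw [neg_one_mul, abs_of_neg (by simpa using h), neg_sub]

theorem casimir_radial_ode_general (s : ℝ) (n k : ℤ)
    (r : ℝ) (hr : 0 < r) (hr1 : r < 1) :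
    DifferentiableAt ℝ (Phi s n k) r ∧
    DifferentiableAt ℝ (deriv (Phi s n k)) r ∧
    ((1 - r ^ 2) ^ 2 / 4) * deriv (deriv (Phi s n k)) r +
      ((1 - r ^ 2) ^ 2 / (4 * r)) * deriv (Phi s n k) r +
      (-((1 - r ^ 2) ^ 2 / (4 * r ^ 2)) * ((n : ℝ) ^ 2 + (k : ℝ) ^ 2) +
        ((1 - r ^ 4) / (2 * r ^ 2)) * (n : ℝ) * (k : ℝ) + s * (1 - s)) * Phi s n k r = 0 := by
  have hPhi : Phi s n k =
      radialHypergeometric (s - eps n k * k) (s + eps n k * n) s (n - k).natAbs := by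
    funext t
    rw [Phi, radialHypergeometric, hyperF_eq_ordinaryHypergeometric]
  obtain ⟨hd1, hd2, hode⟩ := radialHypergeometric_ode (a := s - eps n k * k)
    (b := s + eps n k * n) (by linear_combination eps_mul_sub n k) hr hr1
  have hN : (((n - k).natAbs : ℕ) : ℝ) ^ 2 = ((n : ℝ) - k) ^ 2 := by
    rw [← eps_mul_sub]
    linear_combination ((n : ℝ) - k) ^ 2 * eps_mul_self n k
  rw [hN] at hode
  rw [hPhi]
  refine ⟨hd1, hd2, ?_⟩
  linear_combination (norm := skip) hode - n * k * (1 - r ^ 2) *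
    radialHypergeometric (s - eps n k * k) (s + eps n k * n) s (n - k).natAbs r * eps_mul_self n k
  field_simp
  ring

theorem casimir_radial_ode (s : ℝ) (hs : 1/2 < s) (hs1 : s < 1) (n k : ℤ)
    (r : ℝ) (hr : 0 < r) (hr1 : r < 1) :
    DifferentiableAt ℝ (Phi s n k) r ∧
    DifferentiableAt ℝ (deriv (Phi s n k)) r ∧
    ((1 - r ^ 2) ^ 2 / 4) * deriv (deriv (Phi s n k)) r +
      ((1 - r ^ 2) ^ 2 / (4 * r)) * deriv (Phi s n k) r +
      (-((1 - r ^ 2) ^ 2 / (4 * r ^ 2)) * ((n : ℝ) ^ 2 + (k : ℝ) ^ 2) +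
        ((1 - r ^ 4) / (2 * r ^ 2)) * (n : ℝ) * (k : ℝ) + s * (1 - s)) * Phi s n k r = 0 :=
  casimir_radial_ode_general s n k r hr hr1
end

section
/- Let s ∈ ℝ with 1/2 < s < 1 and let n, k ∈ ℤ with n > k. Then for every r with 0 < r < 1, n·((1 − r²)/r)·Φ_{2n,2k}(r) + (1 − r²)·Φ_{2n,2k}'(r) − k·((1 + r²)/r)·Φ_{2n,2k}(r) = 2·(n − k)·Φ_{2n,2k+2}(r). (This expresses the action of the raising operator: R.Φ_{2n,2k} = 2(n − k)·Φ_{2n,2k+2} for n > k.) -/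
open Filter Topology Polynomial

theorem tendsto_add_div_add_atTop (a b : ℝ) :
    Tendsto (fun m : ℕ => (a + m) / (b + m)) atTop (𝓝 1) := by
  simpa using tendsto_add_mul_div_add_mul_atTop_nhds a b (1 : ℝ) one_ne_zero

section PowerSeries

variable {A ρ : ℕ → ℝ}

theorem summable_mul_pow_of_ratio (hA : ∀ m, A (m + 1) = ρ m * A m)
    (hρ : Tendsto ρ atTop (𝓝 1)) {x : ℝ} (hx : |x| < 1) :
    Summable fun m => A m * x ^ m := by
  obtain ⟨q, hxq, hq⟩ := exists_between hx
  refine summable_of_ratio_norm_eventually_le hq ?_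
  have hlim : Tendsto (fun m => |ρ m| * |x|) atTop (𝓝 |x|) := by
    simpa using hρ.abs.mul_const |x|
  filter_upwards [hlim.eventually (ge_mem_nhds hxq)] with m hm
  calc ‖A (m + 1) * x ^ (m + 1)‖ = |ρ m| * |x| * ‖A m * x ^ m‖ := by
        rw [hA, Real.norm_eq_abs, Real.norm_eq_abs, pow_succ, abs_mul, abs_mul, abs_mul, abs_mul]
        ring
    _ ≤ q * ‖A m * x ^ m‖ := by gcongr

theorem summable_natCast_mul_mul_pow_sub_one_of_ratio (hA : ∀ m, A (m + 1) = ρ m * A m)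
    (hρ : Tendsto ρ atTop (𝓝 1)) {x : ℝ} (hx : |x| < 1) :
    Summable fun m : ℕ => m * A m * x ^ (m - 1) := by
  have hB : ∀ m : ℕ, ((m + 1 : ℕ) + 1 : ℝ) * A (m + 1 + 1)
      = ((m + 2) / (m + 1) * ρ (m + 1)) * ((m + 1 : ℝ) * A (m + 1)) := by
    intro m
    rw [hA (m + 1)]
    push_cast
    field_simp
    ring
  have hlim : Tendsto (fun m : ℕ => ((m : ℝ) + 2) / (m + 1) * ρ (m + 1)) atTop (𝓝 1) := by
    simpa [add_comm] using (tendsto_add_div_add_atTop 2 1).mul (hρ.comp (tendsto_add_atTop_nat 1))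
  rw [← summable_nat_add_iff 1]
  simpa using summable_mul_pow_of_ratio (A := fun m => ((m : ℝ) + 1) * A (m + 1)) hB hlim hx

theorem hasDerivAt_tsum_mul_pow_of_ratio (hA : ∀ m, A (m + 1) = ρ m * A m)
    (hρ : Tendsto ρ atTop (𝓝 1)) {x : ℝ} (hx : |x| < 1) :
    HasDerivAt (fun y => ∑' m, A m * y ^ m) (∑' m : ℕ, m * A m * x ^ (m - 1)) x := by
  obtain ⟨q, hxq, hq⟩ := exists_between hx
  have hq' : |q| < 1 := by rwa [abs_of_nonneg ((abs_nonneg x).trans hxq.le)]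
  have hxq' : x ∈ Metric.ball 0 q := by simpa using hxq
  refine hasDerivAt_tsum_of_isPreconnected (g := fun m y => A m * y ^ m)
    (g' := fun m y => m * A m * y ^ (m - 1)) (t := Metric.ball 0 q)
    (summable_abs_iff.mpr (summable_natCast_mul_mul_pow_sub_one_of_ratio hA hρ hq'))
    Metric.isOpen_ball (convex_ball 0 q).isPreconnected
    (fun m y _ => ((hasDerivAt_pow m y).const_mul (A m)).congr_deriv (by ring))
    (fun m y hy => ?_) hxq' (summable_mul_pow_of_ratio hA hρ hx) hxq'
  have hyq : |y| ≤ |q| := by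
    rw [abs_of_nonneg ((abs_nonneg x).trans hxq.le)]
    simpa using (Metric.mem_ball.mp hy).le
  simp only [Real.norm_eq_abs, abs_mul, abs_pow]
  gcongr

end PowerSeries

section Hypergeometric

variable (a b : ℝ) {c x : ℝ}

noncomputable def hyperCoeff (c : ℝ) (m : ℕ) : ℝ :=
  (ascPochhammer ℝ m).eval a * (ascPochhammer ℝ m).eval b /
    ((ascPochhammer ℝ m).eval c * m.factorial)

theorem hyperCoeff_zero (c : ℝ) : hyperCoeff a b c 0 = 1 := by
  simp [hyperCoeff]

theorem hyperCoeff_succ (hc : 0 < c) (m : ℕ) :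
    hyperCoeff a b c (m + 1) = (a + m) * (b + m) / ((c + m) * (m + 1)) * hyperCoeff a b c m := by
  have := ascPochhammer_pos m c hc
  have : 0 < c + m := by positivity
  simp only [hyperCoeff, ascPochhammer_succ_eval, Nat.factorial_succ, Nat.cast_mul]
  push_cast
  field_simp

theorem tendsto_hyperCoeff_ratio (c : ℝ) :
    Tendsto (fun m : ℕ => (a + m) * (b + m) / ((c + m) * (m + 1))) atTop (𝓝 1) := by
  simpa [mul_div_mul_comm, add_comm _ (1 : ℝ)] using
    (tendsto_add_div_add_atTop a c).mul (tendsto_add_div_add_atTop b 1)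

theorem hasSum_hyperF (hc : 0 < c) (hx : |x| < 1) :
    HasSum (fun m => hyperCoeff a b c m * x ^ m) (hyperF a b c x) :=
  (summable_mul_pow_of_ratio (hyperCoeff_succ a b hc) (tendsto_hyperCoeff_ratio a b c) hx).hasSum

theorem hasDerivAt_hyperF (hc : 0 < c) (hx : |x| < 1) :
    HasDerivAt (hyperF a b c) (∑' m : ℕ, m * hyperCoeff a b c m * x ^ (m - 1)) x :=
  hasDerivAt_tsum_mul_pow_of_ratio (hyperCoeff_succ a b hc) (tendsto_hyperCoeff_ratio a b c) hx

theorem hasSum_deriv_hyperF (hc : 0 < c) (hx : |x| < 1) :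
    HasSum (fun m : ℕ => m * hyperCoeff a b c m * x ^ (m - 1)) (deriv (hyperF a b c) x) := by
  rw [(hasDerivAt_hyperF a b hc hx).deriv]
  exact (summable_natCast_mul_mul_pow_sub_one_of_ratio (hyperCoeff_succ a b hc)
    (tendsto_hyperCoeff_ratio a b c) hx).hasSum

theorem hyperCoeff_sub_one_succ (hc : 0 < c) (m : ℕ) :
    c * hyperCoeff (a - 1) b c (m + 1) = (a - 1) * (b + m) / (m + 1) * hyperCoeff a b (c + 1) m := by
  have := ascPochhammer_pos m (c + 1) (by linarith)
  have hleft : ∀ y : ℝ, (ascPochhammer ℝ (m + 1)).eval y = y * (ascPochhammer ℝ m).eval (y + 1) := by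
    intro y
    simp [ascPochhammer_succ_left, eval_comp]
  simp only [hyperCoeff, hleft (a - 1), hleft c, sub_add_cancel, ascPochhammer_succ_eval,
    Nat.factorial_succ, Nat.cast_mul]
  push_cast
  field_simp

theorem hyperCoeff_contiguous (hc : 0 < c) (m : ℕ) :
    c * hyperCoeff (a - 1) b c (m + 1)
      = (c + 1 + m) * hyperCoeff a b (c + 1) (m + 1) - (b + m) * hyperCoeff a b (c + 1) m := by
  rw [hyperCoeff_sub_one_succ a b hc, hyperCoeff_succ a b (by linarith)]
  field_simp
  ring

theorem hyperF_contiguous (hc : 0 < c) (hx : |x| < 1) :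
    (c - b * x) * hyperF a b (c + 1) x + x * (1 - x) * deriv (hyperF a b (c + 1)) x
      = c * hyperF (a - 1) b c x := by
  have hc1 : 0 < c + 1 := by linarith
  set A := hyperCoeff a b (c + 1)
  set F := hyperF a b (c + 1) x
  set F' := deriv (hyperF a b (c + 1)) x
  have hF : HasSum (fun m => A m * x ^ m) F := hasSum_hyperF a b hc1 hx
  have hxF' : HasSum (fun m : ℕ => m * A m * x ^ m) (x * F') := by
    refine ((hasSum_deriv_hyperF a b hc1 hx).mul_left x).congr_fun fun m => ?_
    rcases m with _ | m
    · simp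
    · simp only [Nat.add_sub_cancel, pow_succ]
      ring
  have hS : HasSum (fun m : ℕ => (c + m) * A m * x ^ m) (c * F + x * F') :=
    ((hF.mul_left c).add hxF').congr_fun fun m => by ring
  have hT : HasSum (fun m : ℕ => (b + m) * A m * x ^ (m + 1)) (x * (b * F + x * F')) :=
    (((hF.mul_left b).add hxF').mul_left x).congr_fun fun m => by ring
  have hG : HasSum (fun m => c * (hyperCoeff (a - 1) b c m * x ^ m))
      (c * F + x * F' - x * (b * F + x * F')) := by
    rw [← hasSum_nat_add_iff' 1]
    convert (((hasSum_nat_add_iff' 1).mpr hS).sub hT).congr_fun fun m => ?_ using 1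
    · simp [A, hyperCoeff_zero]
      ring
    · rw [← mul_assoc, hyperCoeff_contiguous a b hc m]
      push_cast
      ring
  linear_combination -((hasSum_hyperF (a - 1) b hc hx).mul_left c).unique hG

end Hypergeometric

theorem hasDerivAt_one_sub_sq_rpow_mul_pow_mul_comp_sq {G : ℝ → ℝ} {G' r : ℝ} (s : ℝ) (m : ℕ)
    (hG : HasDerivAt G G' (r ^ 2)) (hr : 1 - r ^ 2 ≠ 0) :
    HasDerivAt (fun t => (1 - t ^ 2) ^ s * t ^ m * G (t ^ 2))
      ((-(2 * r) * s * (1 - r ^ 2) ^ (s - 1) * r ^ m + (1 - r ^ 2) ^ s * (m * r ^ (m - 1)))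
          * G (r ^ 2) + (1 - r ^ 2) ^ s * r ^ m * (G' * (2 * r))) r := by
  have hsq : HasDerivAt (fun t : ℝ => t ^ 2) (2 * r) r := by simpa using hasDerivAt_pow 2 r
  exact (((hsq.const_sub 1).rpow_const (Or.inl hr)).mul (hasDerivAt_pow m r)).mul
    (hG.comp (h₂ := G) (h := fun t => t ^ 2) r hsq)

section Phi

variable (s : ℝ) {n k : ℤ} {d : ℕ}

theorem Phi_eq_of_sub_eq_natCast (h : n - k = d) :
    Phi s n k = fun r => (1 - r ^ 2) ^ s * r ^ d * hyperF (s - k) (s + n) (1 + d) (r ^ 2) := by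
  have hkn : k ≤ n := by omega
  funext r
  simp [Phi, eps, hkn, h]

theorem hasDerivAt_Phi_of_sub_eq_natCast (h : n - k = d) {r : ℝ} (hr : r ^ 2 < 1) :
    HasDerivAt (Phi s n k)
      ((-(2 * r) * s * (1 - r ^ 2) ^ (s - 1) * r ^ d + (1 - r ^ 2) ^ s * (d * r ^ (d - 1)))
          * hyperF (s - k) (s + n) (1 + d) (r ^ 2)
        + (1 - r ^ 2) ^ s * r ^ d * (deriv (hyperF (s - k) (s + n) (1 + d)) (r ^ 2) * (2 * r))) r := by
  have hx : |r ^ 2| < 1 := by rwa [abs_of_nonneg (sq_nonneg r)]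
  rw [Phi_eq_of_sub_eq_natCast s h]
  exact hasDerivAt_one_sub_sq_rpow_mul_pow_mul_comp_sq s d
    (hasDerivAt_hyperF _ _ (by positivity) hx).differentiableAt.hasDerivAt (by linarith)

end Phi

theorem raising_operator_on_Phi_general (s : ℝ) (n k : ℤ) (hnk : k < n)
    (r : ℝ) (hr : 0 < r) (hr1 : r < 1) :
    (n : ℝ) * ((1 - r ^ 2) / r) * Phi s n k r + (1 - r ^ 2) * deriv (Phi s n k) r -
      (k : ℝ) * ((1 + r ^ 2) / r) * Phi s n k r
      = 2 * ((n : ℝ) - (k : ℝ)) * Phi s n (k + 1) r := by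
  obtain ⟨d, hd⟩ : ∃ d : ℕ, n - (k + 1) = d := ⟨(n - (k + 1)).toNat, by omega⟩
  have hnk' : n - k = ((d + 1 : ℕ) : ℤ) := by push_cast; omega
  have hn : (n : ℝ) = k + 1 + d := by exact_mod_cast (by omega : n = k + 1 + d)
  have hr2 : r ^ 2 < 1 := by nlinarith
  have hw : 1 - r ^ 2 ≠ 0 := by linarith
  have hcontig := hyperF_contiguous (s - k) (s + n) (c := 1 + d) (by positivity)
    (by rwa [abs_of_nonneg (sq_nonneg r)])
  rw [(hasDerivAt_Phi_of_sub_eq_natCast s hnk' hr2).deriv, Phi_eq_of_sub_eq_natCast s hnk',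
    Phi_eq_of_sub_eq_natCast s hd, Real.rpow_sub_one hw]
  simp only [Int.cast_add, Int.cast_one, ← sub_sub, Nat.add_sub_cancel, Nat.cast_add, Nat.cast_one,
    ← add_assoc]
  rw [hn] at hcontig ⊢
  linear_combination (norm := skip) 2 * (1 - r ^ 2) ^ s * r ^ d * hcontig
  field_simp
  ring

theorem raising_operator_on_Phi (s : ℝ) (hs : 1/2 < s) (hs1 : s < 1) (n k : ℤ) (hnk : k < n)
    (r : ℝ) (hr : 0 < r) (hr1 : r < 1) :
    (n : ℝ) * ((1 - r ^ 2) / r) * Phi s n k r + (1 - r ^ 2) * deriv (Phi s n k) r -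
      (k : ℝ) * ((1 + r ^ 2) / r) * Phi s n k r
      = 2 * ((n : ℝ) - (k : ℝ)) * Phi s n (k + 1) r :=
  raising_operator_on_Phi_general s n k hnk r hr hr1
end
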